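/- arXiv:1611.08176 — 4 statements merged into one kernel-verified Lean document; each statement's English description precedes it below -/
import Mathlib

section
/- Let X, Y be real Hilbert spaces with Y continuously and densely embedded in X and ‖y‖_X ≤ ‖y‖_Y for all y ∈ Y. Suppose ‖y‖_Y = sup over nonzero v ∈ X of (y,v)_X / ‖v‖_{Y'}, where ‖·‖_{Y'} is the dual norm in the Gelfand triple Y ⊂ X ⊂ Y'. Then for any R > 0 the closed ball B_R = {y ∈ Y : ‖y‖_Y ≤ R} is a closed subset of X with respect to the X-norm: if (y_n) ⊂ B_R converges in X to x, then x ∈ Y and ‖x‖_Y ≤ R. -/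
/-!
The bound `‖⟪J uₙ, v⟫‖ = ‖⟪uₙ, J† v⟫‖ ≤ R ‖J† v‖` passes to the limit `x` of `J uₙ`. Hence the
functional `v ↦ ⟪x, v⟫` factors through `J†` via a functional of norm `≤ R` on the range of `J†`;
Hahn–Banach extends it to all of `Y`, and its Riesz representative `y` satisfies `J y = x` and
`‖y‖ ≤ R`.
-/

open RealInnerProductSpace ContinuousLinearMap Filter

theorem LinearMap.exists_strongDual_comp_eq_of_norm_le {𝕜 E F : Type*} [RCLike 𝕜]
    [NormedAddCommGroup E] [NormedSpace 𝕜 E] [NormedAddCommGroup F] [NormedSpace 𝕜 F]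
    (S : E →ₗ[𝕜] F) (φ : E →ₗ[𝕜] 𝕜) {R : ℝ} (hR : 0 ≤ R) (hφ : ∀ v, ‖φ v‖ ≤ R * ‖S v‖) :
    ∃ g : StrongDual 𝕜 F, ‖g‖ ≤ R ∧ ∀ v, g (S v) = φ v := by
  have hker : LinearMap.ker S ≤ LinearMap.ker φ := fun v hv ↦ by
    simpa [LinearMap.mem_ker.mp hv] using hφ v
  let f : LinearMap.range S →ₗ[𝕜] 𝕜 :=
    (LinearMap.ker S).liftQ φ hker ∘ₗ S.quotKerEquivRange.symm.toLinearMap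
  have hf : ∀ v, f ⟨S v, LinearMap.mem_range_self S v⟩ = φ v := fun v ↦ by
    simp [f, LinearMap.quotKerEquivRange_symm_apply_image]
  have hbound : ∀ z, ‖f z‖ ≤ R * ‖z‖ := by
    rintro ⟨_, v, rfl⟩
    rw [hf]
    exact hφ v
  obtain ⟨g, hg, hgnorm⟩ := exists_extension_norm_eq _ (f.mkContinuous R hbound)
  exact ⟨g, hgnorm ▸ f.mkContinuous_norm_le hR hbound,
    fun v ↦ (hg ⟨S v, LinearMap.mem_range_self S v⟩).trans (hf v)⟩

section Hilbert

variable {𝕜 X Y : Type*} [RCLike 𝕜]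
  [NormedAddCommGroup X] [InnerProductSpace 𝕜 X] [CompleteSpace X]
  [NormedAddCommGroup Y] [InnerProductSpace 𝕜 Y] [CompleteSpace Y]

theorem ContinuousLinearMap.exists_apply_eq_and_norm_le_of_norm_inner_le (J : Y →L[𝕜] X)
    {x : X} {R : ℝ} (hR : 0 ≤ R) (hx : ∀ v, ‖inner 𝕜 x v‖ ≤ R * ‖adjoint J v‖) :
    ∃ y : Y, J y = x ∧ ‖y‖ ≤ R := by
  obtain ⟨g, hg_norm, hg⟩ :=
    (adjoint J).toLinearMap.exists_strongDual_comp_eq_of_norm_le (innerₛₗ 𝕜 x) hR hx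
  refine ⟨(InnerProductSpace.toDual 𝕜 Y).symm g, ext_inner_right 𝕜 fun v ↦ ?_, ?_⟩
  · rw [← adjoint_inner_right, InnerProductSpace.toDual_symm_apply]
    exact hg v
  · rwa [LinearIsometryEquiv.norm_map]

theorem ContinuousLinearMap.norm_inner_le_of_tendsto (J : Y →L[𝕜] X) {R : ℝ}
    {u : ℕ → Y} {x : X} (hu : ∀ n, ‖u n‖ ≤ R) (hx : Tendsto (fun n ↦ J (u n)) atTop (nhds x))
    (v : X) : ‖inner 𝕜 x v‖ ≤ R * ‖adjoint J v‖ := by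
  refine le_of_tendsto (hx.inner tendsto_const_nhds).norm (Eventually.of_forall fun n ↦ ?_)
  calc ‖inner 𝕜 (J (u n)) v‖ = ‖inner 𝕜 (u n) (adjoint J v)‖ := by rw [adjoint_inner_right]
    _ ≤ ‖u n‖ * ‖adjoint J v‖ := norm_inner_le_norm _ _
    _ ≤ R * ‖adjoint J v‖ := by gcongr; exact hu n

end Hilbert

theorem stmt0_general
    {X Y : Type*} [NormedAddCommGroup X] [InnerProductSpace ℝ X] [CompleteSpace X]
    [NormedAddCommGroup Y] [InnerProductSpace ℝ Y] [CompleteSpace Y]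
    (J : Y →L[ℝ] X) :
    ∀ R : ℝ, 0 < R → ∀ (u : ℕ → Y) (x : X),
      (∀ n, ‖u n‖ ≤ R) →
      Filter.Tendsto (fun n => J (u n)) Filter.atTop (nhds x) →
      ∃ y : Y, J y = x ∧ ‖y‖ ≤ R := by
  intro R hR u x hu hx
  exact J.exists_apply_eq_and_norm_le_of_norm_inner_le hR.le (J.norm_inner_le_of_tendsto hu hx)

/-- Kato's Lemma 7.3: under the Gelfand-triple norm formula, `Y`-norm balls are closed
in the `X`-norm. `J : Y →L[ℝ] X` is the dense continuous embedding, `N : X → ℝ` is the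
dual norm of the Gelfand triple `Y ⊂ X ⊂ Y'`. -/
theorem stmt0
    {X Y : Type*} [NormedAddCommGroup X] [InnerProductSpace ℝ X] [CompleteSpace X]
    [NormedAddCommGroup Y] [InnerProductSpace ℝ Y] [CompleteSpace Y]
    (J : Y →L[ℝ] X) (hJinj : Function.Injective J)
    (hJdense : DenseRange J)
    (hJle : ∀ y : Y, ‖J y‖ ≤ ‖y‖)
    (N : X → ℝ)
    (hN : ∀ v : X, N v = sSup {r : ℝ | ∃ y : Y, y ≠ 0 ∧ r = ⟪J y, v⟫ / ‖y‖})
    (hnorm : ∀ y : Y, ‖y‖ = sSup {r : ℝ | ∃ v : X, v ≠ 0 ∧ r = ⟪J y, v⟫ / N v}) :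
    ∀ R : ℝ, 0 < R → ∀ (u : ℕ → Y) (x : X),
      (∀ n, ‖u n‖ ≤ R) →
      Filter.Tendsto (fun n => J (u n)) Filter.atTop (nhds x) →
      ∃ y : Y, J y = x ∧ ‖y‖ ≤ R :=
  stmt0_general J
end

section
/- Let H be a real Hilbert space, let A, Ã be linear maps from a subspace Y ⊂ H to H, f, f̃ ∈ H, τ > 0, u_0 ∈ H. Suppose w, w̃ ∈ Y satisfy (w − u_0)/(τ/2) + A w = f and (w̃ − u_0)/(τ/2) + Ã w̃ = f̃, where Ã is accretive ((v, Ã v) ≥ 0 for all v ∈ Y). If |(Ã − A) w| ≤ L₁ and |f̃ − f| ≤ L₂, then |w̃ − w| ≤ (τ/2)(L₁ + L₂). -/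
open RealInnerProductSpace

theorem mul_norm_le_norm_smul_add_of_inner_nonneg {H : Type*} [NormedAddCommGroup H]
    [InnerProductSpace ℝ H] {v x : H} (hvx : 0 ≤ ⟪v, x⟫) (c : ℝ) :
    c * ‖v‖ ≤ ‖c • v + x‖ := by
  rcases (norm_nonneg v).eq_or_lt with hv | hv
  · rw [← hv, mul_zero]
    exact norm_nonneg _
  have hsq : c * ‖v‖ * ‖v‖ ≤ ‖c • v + x‖ * ‖v‖ :=
    calc c * ‖v‖ * ‖v‖ ≤ c * ‖v‖ ^ 2 + ⟪v, x⟫ := by rw [mul_assoc, ← pow_two]; linarith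
      _ = ⟪v, c • v + x⟫ := by
        rw [inner_add_right, real_inner_smul_right, real_inner_self_eq_norm_sq]
      _ ≤ ‖v‖ * ‖c • v + x‖ := real_inner_le_norm _ _
      _ = ‖c • v + x‖ * ‖v‖ := mul_comm _ _
  exact le_of_mul_le_mul_right hsq hv

/-- Contraction estimate for the fixed-point map of the fully implicit midpoint rule:
`w` solves the equation with operator `A` and rhs `f`, `wt` solves it with the accretive
operator `At` and rhs `ft`; then `|wt − w| ≤ (τ/2)(L₁ + L₂)`. -/
theorem stmt4
    {H : Type*} [NormedAddCommGroup H] [InnerProductSpace ℝ H]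
    (Y : Submodule ℝ H) (A At : Y →ₗ[ℝ] H)
    (hacc : ∀ v : Y, 0 ≤ ⟪(v : H), At v⟫)
    (f ft u₀ : H) (τ : ℝ) (hτ : 0 < τ)
    (w wt : Y)
    (hw : (τ / 2)⁻¹ • ((w : H) - u₀) + A w = f)
    (hwt : (τ / 2)⁻¹ • ((wt : H) - u₀) + At wt = ft)
    (L₁ L₂ : ℝ)
    (hL₁ : ‖At w - A w‖ ≤ L₁)
    (hL₂ : ‖ft - f‖ ≤ L₂) :
    ‖(wt : H) - (w : H)‖ ≤ (τ / 2) * (L₁ + L₂) := by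
  have hdiff : (τ / 2)⁻¹ • ((wt - w : Y) : H) + At (wt - w) = (ft - f) - (At w - A w) := by
    rw [Submodule.coe_sub, map_sub, ← hw, ← hwt]
    module
  have hbound := mul_norm_le_norm_smul_add_of_inner_nonneg (hacc (wt - w)) (τ / 2)⁻¹
  rw [hdiff, Submodule.coe_sub] at hbound
  have hrhs : ‖(ft - f) - (At w - A w)‖ ≤ L₁ + L₂ :=
    (norm_sub_le _ _).trans (by linarith)
  rw [← inv_mul_le_iff₀ (by positivity)]
  exact hbound.trans hrhs
end

section
/- Let H be a real Hilbert space with inner product (·,·). Let 𝒜 be an invertible m×m real matrix that is coercive: vᵀ𝒟𝒜⁻¹v ≥ α vᵀ𝒟v for all v ∈ ℝᵐ, for some positive diagonal 𝒟 = diag(d_i) and α > 0. Let A_1, …, A_m be accretive linear operators on H ((w, A_i w) ≥ 0 on their domains). Let τ > 0. Then for any W = (W_1,…,W_m) with W_i in the domain of A_i, writing G = (𝒜⁻¹ ⊗ I + τ·diag(A_i)) W, one has the a priori bound |W|_𝒟 ≤ α⁻¹ |G|_𝒟, where |W|²_𝒟 = Σ_i d_i |W_i|². -/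
/- The bound is an energy estimate. Pairing the stage equation with `𝒟 W` gives
`∑ dᵢ ⟪Wᵢ, Gᵢ⟫ = ∑ dᵢ (𝒜⁻¹)ᵢⱼ ⟪Wᵢ, Wⱼ⟫ + τ ∑ dᵢ ⟪Wᵢ, AᵢWᵢ⟫`. The last sum is nonnegative by
accretivity, and coercivity of `𝒜⁻¹`, transferred from `ℝᵐ` to `Hᵐ` by expanding the inner
products in an orthonormal basis of the span of the `Wᵢ`, bounds the first sum below by
`α |W|²_𝒟`. Cauchy–Schwarz in the weighted norm then gives `α |W|²_𝒟 ≤ |W|_𝒟 |G|_𝒟`. -/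

open RealInnerProductSpace Matrix

section
variable {ι E : Type*} [Fintype ι] [NormedAddCommGroup E] [InnerProductSpace ℝ E]

lemma sum_sum_mul_inner_nonneg_of_finiteDimensional [FiniteDimensional ℝ E] (P : Matrix ι ι ℝ)
    (hP : ∀ v : ι → ℝ, 0 ≤ v ⬝ᵥ P *ᵥ v) (x : ι → E) :
    0 ≤ ∑ i, ∑ j, P i j * ⟪x i, x j⟫ := by
  let b := stdOrthonormalBasis ℝ E
  let v : _ → ι → ℝ := fun k i => ⟪b k, x i⟫
  calc 0 ≤ ∑ k, v k ⬝ᵥ P *ᵥ v k := Finset.sum_nonneg fun k _ => hP _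
    _ = ∑ k, ∑ i, ∑ j, v k i * (P i j * v k j) := by
      simp only [dotProduct, mulVec, Finset.mul_sum]
    _ = ∑ i, ∑ j, ∑ k, v k i * (P i j * v k j) := by
      rw [Finset.sum_comm]
      exact Finset.sum_congr rfl fun i _ => Finset.sum_comm
    _ = ∑ i, ∑ j, P i j * ⟪x i, x j⟫ := by
      refine Finset.sum_congr rfl fun i _ => Finset.sum_congr rfl fun j _ => ?_
      rw [← b.sum_inner_mul_inner, Finset.mul_sum]
      refine Finset.sum_congr rfl fun k _ => ?_
      simp only [v, real_inner_comm (x i) (b k)]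
      ring

lemma sum_sum_mul_inner_nonneg (P : Matrix ι ι ℝ) (hP : ∀ v : ι → ℝ, 0 ≤ v ⬝ᵥ P *ᵥ v)
    (x : ι → E) : 0 ≤ ∑ i, ∑ j, P i j * ⟪x i, x j⟫ := by
  let K := Submodule.span ℝ (Set.range x)
  let y : ι → K := fun i => ⟨x i, Submodule.subset_span ⟨i, rfl⟩⟩
  have : FiniteDimensional ℝ K := FiniteDimensional.span_of_finite ℝ (Set.finite_range x)
  simpa [y] using sum_sum_mul_inner_nonneg_of_finiteDimensional P hP y

lemma mul_sum_mul_norm_sq_le_of_coercive {d : ι → ℝ} {M : Matrix ι ι ℝ} {α : ℝ}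
    (hcoerc : ∀ v : ι → ℝ, α * ∑ i, d i * v i * v i ≤ ∑ i, d i * v i * (M *ᵥ v) i)
    (x : ι → E) :
    α * ∑ i, d i * ‖x i‖ ^ 2 ≤ ∑ i, ∑ j, d i * M i j * ⟪x i, x j⟫ := by
  classical
  have hP : ∀ v : ι → ℝ, 0 ≤ v ⬝ᵥ (diagonal d * M - α • diagonal d) *ᵥ v := by
    intro v
    have hv : v ⬝ᵥ (diagonal d * M - α • diagonal d) *ᵥ v
        = ∑ i, d i * v i * (M *ᵥ v) i - α * ∑ i, d i * v i * v i := by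
      rw [sub_mulVec, smul_mulVec, ← mulVec_mulVec, dotProduct_sub, dotProduct_smul, smul_eq_mul]
      simp only [dotProduct, mulVec_diagonal, mul_left_comm, mul_assoc]
    linarith [hcoerc v]
  have h := sum_sum_mul_inner_nonneg _ hP x
  simp only [Matrix.sub_apply, Matrix.smul_apply, diagonal_mul, diagonal_apply, smul_eq_mul, sub_mul,
    Finset.sum_sub_distrib, ite_mul, zero_mul, mul_ite, mul_zero, Finset.sum_ite_eq,
    Finset.mem_univ, if_true, real_inner_self_eq_norm_sq] at h
  simpa only [Finset.mul_sum, mul_assoc, sub_nonneg] using h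

lemma sum_mul_inner_le_sqrt_mul_sqrt {d : ι → ℝ} (hd : ∀ i, 0 ≤ d i) (x y : ι → E) :
    ∑ i, d i * ⟪x i, y i⟫
      ≤ √(∑ i, d i * ‖x i‖ ^ 2) * √(∑ i, d i * ‖y i‖ ^ 2) := by
  have hsq : ∀ (i : ι) (z : E), (√(d i) * ‖z‖) ^ 2 = d i * ‖z‖ ^ 2 := fun i z => by
    rw [mul_pow, Real.sq_sqrt (hd i)]
  calc ∑ i, d i * ⟪x i, y i⟫
      ≤ ∑ i, (√(d i) * ‖x i‖) * (√(d i) * ‖y i‖) := Finset.sum_le_sum fun i _ => by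
        rw [mul_mul_mul_comm, Real.mul_self_sqrt (hd i)]
        exact mul_le_mul_of_nonneg_left (real_inner_le_norm _ _) (hd i)
    _ ≤ √(∑ i, (√(d i) * ‖x i‖) ^ 2) * √(∑ i, (√(d i) * ‖y i‖) ^ 2) :=
        Real.sum_mul_le_sqrt_mul_sqrt _ _ _
    _ = √(∑ i, d i * ‖x i‖ ^ 2) * √(∑ i, d i * ‖y i‖ ^ 2) := by simp only [hsq]

end

lemma le_inv_mul_of_mul_mul_self_le_mul {a b α : ℝ} (hb : 0 ≤ b) (hα : 0 < α)
    (h : α * (a * a) ≤ a * b) : a ≤ α⁻¹ * b := by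
  rw [le_inv_mul_iff₀ hα]
  nlinarith [sq_nonneg (α * a - b)]

theorem stmt10_general
    {H : Type*} [NormedAddCommGroup H] [InnerProductSpace ℝ H]
    {m : ℕ} (𝒜 : Matrix (Fin m) (Fin m) ℝ)
    (d : Fin m → ℝ) (hd : ∀ i, 0 < d i) (α : ℝ) (hα : 0 < α)
    (hcoerc : ∀ v : Fin m → ℝ,
      α * ∑ i, d i * v i * v i ≤ ∑ i, d i * v i * (𝒜⁻¹.mulVec v) i)
    (D : Fin m → Submodule ℝ H) (A : ∀ i, D i →ₗ[ℝ] H)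
    (hacc : ∀ i, ∀ w : D i, 0 ≤ ⟪(w : H), A i w⟫)
    (τ : ℝ) (hτ : 0 < τ)
    (W : ∀ i, D i) (G : Fin m → H)
    (hG : ∀ i, G i = (∑ j, 𝒜⁻¹ i j • ((W j : H))) + τ • A i (W i)) :
    Real.sqrt (∑ i, d i * ‖(W i : H)‖ ^ 2) ≤ α⁻¹ * Real.sqrt (∑ i, d i * ‖G i‖ ^ 2) := by
  set x : Fin m → H := fun i => W i
  have hpair : ∑ i, d i * ⟪x i, G i⟫
      = ∑ i, ∑ j, d i * 𝒜⁻¹ i j * ⟪x i, x j⟫ + τ * ∑ i, d i * ⟪x i, A i (W i)⟫ := by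
    simp only [hG, inner_add_right, inner_sum, real_inner_smul_right, mul_add,
      Finset.sum_add_distrib, Finset.mul_sum]
    congr 1
    · exact Finset.sum_congr rfl fun i _ => Finset.sum_congr rfl fun j _ => by ring
    · exact Finset.sum_congr rfl fun i _ => by ring
  have haccum : 0 ≤ ∑ i, d i * ⟪x i, A i (W i)⟫ :=
    Finset.sum_nonneg fun i _ => mul_nonneg (hd i).le (hacc i (W i))
  have henergy : α * ∑ i, d i * ‖x i‖ ^ 2 ≤ ∑ i, d i * ⟪x i, G i⟫ := by
    rw [hpair]
    linarith [mul_sum_mul_norm_sq_le_of_coercive hcoerc x, mul_nonneg hτ.le haccum]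
  have hsq : √(∑ i, d i * ‖x i‖ ^ 2) * √(∑ i, d i * ‖x i‖ ^ 2) = ∑ i, d i * ‖x i‖ ^ 2 :=
    Real.mul_self_sqrt (Finset.sum_nonneg fun i _ => mul_nonneg (hd i).le (sq_nonneg _))
  refine le_inv_mul_of_mul_mul_self_le_mul (Real.sqrt_nonneg _) hα ?_
  rw [hsq]
  exact henergy.trans (sum_mul_inner_le_sqrt_mul_sqrt (fun i => (hd i).le) x G)

/-- A priori bound for Runge–Kutta stage equations: coercivity of the coefficient
matrix `𝒜` plus accretivity of the operators `Aᵢ` gives `|W|_𝒟 ≤ α⁻¹ |G|_𝒟` for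
`G = (𝒜⁻¹ ⊗ I + τ diag(Aᵢ)) W`. -/
theorem stmt10
    {H : Type*} [NormedAddCommGroup H] [InnerProductSpace ℝ H]
    {m : ℕ} (𝒜 : Matrix (Fin m) (Fin m) ℝ) (hinv : IsUnit 𝒜.det)
    (d : Fin m → ℝ) (hd : ∀ i, 0 < d i) (α : ℝ) (hα : 0 < α)
    (hcoerc : ∀ v : Fin m → ℝ,
      α * ∑ i, d i * v i * v i ≤ ∑ i, d i * v i * (𝒜⁻¹.mulVec v) i)
    (D : Fin m → Submodule ℝ H) (A : ∀ i, D i →ₗ[ℝ] H)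
    (hacc : ∀ i, ∀ w : D i, 0 ≤ ⟪(w : H), A i w⟫)
    (τ : ℝ) (hτ : 0 < τ)
    (W : ∀ i, D i) (G : Fin m → H)
    (hG : ∀ i, G i = (∑ j, 𝒜⁻¹ i j • ((W j : H))) + τ • A i (W i)) :
    Real.sqrt (∑ i, d i * ‖(W i : H)‖ ^ 2) ≤ α⁻¹ * Real.sqrt (∑ i, d i * ‖G i‖ ^ 2) :=
  stmt10_general 𝒜 d hd α hα hcoerc D A hacc τ hτ W G hG
end

section
/- Let X, Y be real Hilbert spaces, Y densely embedded in X, S : Y → X an isometry (‖y‖_Y = |Sy|_X) which is self-adjoint as an operator on X. Let A be a linear operator with Y ⊂ D(A) and |A w| ≤ M_A ‖w‖_Y for w ∈ Y, and suppose S A S⁻¹ = A + B where |Bv| ≤ M_B |v| for all v ∈ X. Then the adjoint A* satisfies |A* w| ≤ (M_A + M_B) ‖w‖_Y for all w ∈ Y (in the domain of A*). -/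
/-!
Move `S` across the inner product: `⟪w, A v⟫ = ⟪S w, S⁻¹ A v⟫`, and the commutation relation
gives `S⁻¹ A v = A S⁻¹ v - S⁻¹ B v`. The first term is bounded by `M_A ‖S w‖ ‖v‖`, and
`⟪S w, S⁻¹ B v⟫ = ⟪w, B v⟫` by `M_B ‖w‖ ‖v‖ ≤ M_B ‖S w‖ ‖v‖`. Hence the functional `v ↦ ⟪z, v⟫`,
whose norm is `‖z‖`, has norm at most `(M_A + M_B) ‖S w‖`.
-/

open RealInnerProductSpace

theorem LinearEquiv.symm_apply_eq_sub_of_conj_eq_add {R M : Type*} [Ring R] [AddCommGroup M]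
    [Module R M] (S : M ≃ₗ[R] M) {A B : M →ₗ[R] M} (hcomm : ∀ v, S (A (S.symm v)) = A v + B v)
    (v : M) : S.symm (A v) = A (S.symm v) - S.symm (B v) := by
  rw [eq_sub_iff_add_eq, ← map_add, S.symm_apply_eq, hcomm]

theorem norm_le_of_forall_abs_inner_le {X : Type*} [NormedAddCommGroup X]
    [InnerProductSpace ℝ X] {z : X} {M : ℝ} (hM : 0 ≤ M) (h : ∀ v, |⟪z, v⟫| ≤ M * ‖v‖) :
    ‖z‖ ≤ M := by
  rw [← innerSL_apply_norm ℝ z]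
  exact ContinuousLinearMap.opNorm_le_bound _ hM h

section ConjugatePerturbation

variable {X : Type*} [NormedAddCommGroup X] [InnerProductSpace ℝ X] {S : X ≃ₗ[ℝ] X}
  {A B : X →ₗ[ℝ] X} {M_A M_B : ℝ}

theorem abs_inner_apply_le_of_conj_eq_add (hSsa : ∀ x y : X, ⟪S x, y⟫ = ⟪x, S y⟫)
    (hle : ∀ y : X, ‖y‖ ≤ ‖S y‖) (hA : ∀ w : X, ‖A w‖ ≤ M_A * ‖S w‖)
    (hcomm : ∀ v : X, S (A (S.symm v)) = A v + B v) (hB : ∀ v : X, ‖B v‖ ≤ M_B * ‖v‖)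
    (w v : X) : |⟪w, A v⟫| ≤ (M_A + M_B) * ‖S w‖ * ‖v‖ := by
  have hsplit : ⟪w, A v⟫ = ⟪S w, A (S.symm v)⟫ - ⟪w, B v⟫ := by
    rw [← S.apply_symm_apply (A v), ← hSsa, S.symm_apply_eq_sub_of_conj_eq_add hcomm,
      inner_sub_right, hSsa w (S.symm (B v)), S.apply_symm_apply]
  have hAterm : |⟪S w, A (S.symm v)⟫| ≤ ‖S w‖ * (M_A * ‖v‖) :=
    calc |⟪S w, A (S.symm v)⟫| ≤ ‖S w‖ * ‖A (S.symm v)‖ := abs_real_inner_le_norm _ _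
      _ ≤ ‖S w‖ * (M_A * ‖v‖) := by
        gcongr
        simpa only [S.apply_symm_apply] using hA (S.symm v)
  have hBterm : |⟪w, B v⟫| ≤ ‖S w‖ * (M_B * ‖v‖) :=
    calc |⟪w, B v⟫| ≤ ‖w‖ * ‖B v‖ := abs_real_inner_le_norm _ _
      _ ≤ ‖S w‖ * (M_B * ‖v‖) := mul_le_mul (hle w) (hB v) (norm_nonneg _) (norm_nonneg _)
  calc |⟪w, A v⟫| ≤ |⟪S w, A (S.symm v)⟫| + |⟪w, B v⟫| := hsplit ▸ abs_sub _ _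
    _ ≤ ‖S w‖ * (M_A * ‖v‖) + ‖S w‖ * (M_B * ‖v‖) := add_le_add hAterm hBterm
    _ = (M_A + M_B) * ‖S w‖ * ‖v‖ := by ring

end ConjugatePerturbation

/-- Adjoint bound: if `S` is a self-adjoint isomorphism of `X` defining the `Y`-norm
`‖w‖_Y = ‖S w‖`, `‖A w‖ ≤ M_A ‖S w‖`, and `S A S⁻¹ = A + B` with `‖B v‖ ≤ M_B ‖v‖`,
then any `z` satisfying the adjoint relation `(z, v) = (w, A v)` obeys
`‖z‖ ≤ (M_A + M_B) ‖S w‖`. -/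
theorem stmt11
    {X : Type*} [NormedAddCommGroup X] [InnerProductSpace ℝ X]
    (S : X ≃ₗ[ℝ] X)
    (hSsa : ∀ x y : X, ⟪S x, y⟫ = ⟪x, S y⟫)
    (hle : ∀ y : X, ‖y‖ ≤ ‖S y‖)
    (A B : X →ₗ[ℝ] X) (M_A M_B : ℝ)
    (hA : ∀ w : X, ‖A w‖ ≤ M_A * ‖S w‖)
    (hcomm : ∀ v : X, S (A (S.symm v)) = A v + B v)
    (hB : ∀ v : X, ‖B v‖ ≤ M_B * ‖v‖)
    (w z : X)
    (hadj : ∀ v : X, ⟪z, v⟫ = ⟪w, A v⟫) :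
    ‖z‖ ≤ (M_A + M_B) * ‖S w‖ := by
  have hbound := abs_inner_apply_le_of_conj_eq_add hSsa hle hA hcomm hB w
  have hnonneg : 0 ≤ (M_A + M_B) * ‖S w‖ := by
    rcases eq_or_ne w 0 with rfl | hw
    · simp
    · exact nonneg_of_mul_nonneg_left ((abs_nonneg _).trans (hbound w)) (norm_pos_iff.2 hw)
  exact norm_le_of_forall_abs_inner_le hnonneg fun v ↦ hadj v ▸ hbound v
end
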